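/- Let A ∈ Mat_N(ℤ) have a single positive integer eigenvalue λ > 1 and be non-diagonalizable, with largest Jordan block size ℓ+1. Let π = φ_{(A-λI)^ℓ} be the monomial map of (A-λI)^ℓ. Then for all P ∈ 𝔾_m^N(ℚ̄), ĥ_A⁺(P) = h(π(P))/(ℓ!·λ^ℓ), where ĥ_A⁺(P) = limsup_{n→∞} h(φ_A^n(P))/(n^ℓ λ^n). -/

import Mathlib

/-!
Write `A = λ + 𝒩` with `𝒩 ^ (ℓ + 1) = 0`. By the binomial theorem only the terms `k ≤ ℓ` of
`A ^ n = ∑ C(n, k) λ ^ (n - k) 𝒩 ^ k` survive, and `C(n, k) / n ^ ℓ → 0` for `k < ℓ`, so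
`A ^ n / (n ^ ℓ λ ^ n) → 𝒩 ^ ℓ / (ℓ! λ ^ ℓ)`.

Place by place, `h(φ_B(P))` is the positive part of the largest coordinate of `B` applied to the
vector of local logarithms of `P`. This expression makes sense for real `B`, is positively
homogeneous in `B`, and is continuous in `B` because only the finitely many places where some
coordinate of `P` is not a unit contribute. Hence `h(φ_A^n(P)) / (n ^ ℓ λ ^ n)` converges to
`h(π(P)) / (ℓ! λ ^ ℓ)`, and the limsup is a limit.
-/

open Filter NumberField IsDedekindDomain
open scoped Classical

noncomputable section

/-- The logarithm of the normalized absolute value of `a` at the finite place `v` of the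
number field `K`:  `log ‖a‖_v = -(additive valuation of a) * log (norm of v)`. -/
def finVal (K : Type*) [Field K] [NumberField K]
    (v : HeightOneSpectrum (𝓞 K)) (a : K) : ℝ :=
  if h : a = 0 then 0
  else (Multiplicative.toAdd (WithZero.unzero ((v.valuation K).ne_zero_iff.mpr h)) : ℤ) *
    Real.log (Ideal.absNorm v.asIdeal)

/-- The absolute logarithmic Weil height of a tuple of elements of a number field `K`:
`h(P) = Σ_{v ∈ M_K} max {0, log ‖x₁‖_v, …, log ‖x_N‖_v}` with suitably normalized
absolute values. -/
def logHeight (K : Type*) [Field K] [NumberField K] {N : ℕ} (x : Fin N → K) : ℝ :=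
  (Module.finrank ℚ K : ℝ)⁻¹ *
    ((∑ w : InfinitePlace K, (w.mult : ℝ) * ⨆ i, max 0 (Real.log (w (x i)))) +
     ∑ᶠ v : HeightOneSpectrum (𝓞 K), ⨆ i, max 0 (finVal K v (x i)))

/-- The height of a point of `𝔾_m^N(K)`. -/
def uHeight (K : Type*) [Field K] [NumberField K] {N : ℕ} (x : Fin N → Kˣ) : ℝ :=
  logHeight K (fun i => (x i : K))

/-- The monomial map associated to an integer matrix `A`:
`φ_A(x₁,…,x_N) = (∏ x_j^{a_{1j}}, …, ∏ x_j^{a_{Nj}})`. -/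
def phi {G : Type*} [CommGroup G] {N : ℕ} (A : Matrix (Fin N) (Fin N) ℤ)
    (x : Fin N → G) : Fin N → G :=
  fun i => ∏ j, (x j) ^ (A i j)


open Finset Topology Asymptotics
open scoped Matrix
open NumberField.HeightOneSpectrum (adicAbv adicAbv_def)

lemma Finset.prod_zpow_eq_zpow_sum {ι G : Type*} [CommGroup G] (s : Finset ι) (f : ι → ℤ)
    (a : G) : ∏ i ∈ s, a ^ f i = a ^ ∑ i ∈ s, f i :=
  cons_induction (by simp) (fun _ _ _ _ ↦ by simp [zpow_add, *]) s

section MonomialMap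

variable {G : Type*} [CommGroup G] {N : ℕ}

lemma phi_one (x : Fin N → G) : phi 1 x = x := by
  funext i
  simp [phi, Matrix.one_apply]

lemma phi_mul (A B : Matrix (Fin N) (Fin N) ℤ) (x : Fin N → G) :
    phi (A * B) x = phi A (phi B x) := by
  funext i
  simp only [phi, Matrix.mul_apply, ← Finset.prod_zpow, ← zpow_mul, ← prod_zpow_eq_zpow_sum]
  rw [Finset.prod_comm]
  simp only [mul_comm]

lemma phi_iterate (A : Matrix (Fin N) (Fin N) ℤ) (x : Fin N → G) (n : ℕ) :
    (phi A)^[n] x = phi (A ^ n) x := by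
  induction n with
  | zero => simp [phi_one]
  | succ n ih => rw [Function.iterate_succ_apply', ih, ← phi_mul, ← pow_succ']

end MonomialMap

lemma tendsto_choose_div_pow_of_lt {k ℓ : ℕ} (h : k < ℓ) :
    Tendsto (fun n : ℕ => (n.choose k : ℝ) / (n : ℝ) ^ ℓ) atTop (𝓝 0) :=
  ((isTheta_choose k).isBigO.trans_isLittleO
    ((isLittleO_pow_pow_atTop_of_lt h).comp_tendsto tendsto_natCast_atTop_atTop))
    |>.tendsto_div_nhds_zero

lemma tendsto_choose_div_pow_self (k : ℕ) :
    Tendsto (fun n : ℕ => (n.choose k : ℝ) / (n : ℝ) ^ k) atTop (𝓝 (k.factorial : ℝ)⁻¹) := by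
  refine ((isEquivalent_choose k).div IsEquivalent.refl).symm.tendsto_nhds
    (tendsto_const_nhds.congr' ?_)
  filter_upwards [eventually_ne_atTop 0] with n hn
  simp only [Pi.div_apply]
  field_simp

lemma tendsto_smul_algebraMap_add_pow_of_pow_succ_eq_zero {𝔸 : Type*} [Ring 𝔸] [Algebra ℝ 𝔸]
    [TopologicalSpace 𝔸] [ContinuousAdd 𝔸] [ContinuousSMul ℝ 𝔸] {x : 𝔸} {ℓ : ℕ}
    (hx : x ^ (ℓ + 1) = 0) {c : ℝ} (hc : c ≠ 0) :
    Tendsto (fun n : ℕ => ((n : ℝ) ^ ℓ * c ^ n)⁻¹ • (algebraMap ℝ 𝔸 c + x) ^ n) atTop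
      (𝓝 (((ℓ.factorial : ℝ) * c ^ ℓ)⁻¹ • x ^ ℓ)) := by
  have hexpand (n : ℕ) (hn : ℓ ≤ n) : (algebraMap ℝ 𝔸 c + x) ^ n =
      ∑ k ∈ range (ℓ + 1), ((n.choose k : ℝ) * c ^ (n - k)) • x ^ k := by
    rw [add_comm, (Algebra.commute_algebraMap_right c x).add_pow]
    refine (Finset.sum_subset (range_subset_range.mpr (by omega)) fun k _ hk => ?_).symm.trans
      (Finset.sum_congr rfl fun k _ => ?_)
    · rw [pow_eq_zero_of_le (by grind) hx, zero_mul, zero_mul]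
    · rw [← map_pow, ← map_natCast (algebraMap ℝ 𝔸), mul_assoc, ← map_mul, ← Algebra.commutes,
        Algebra.smul_def, mul_comm (c ^ _)]
  have hscaled : ∀ᶠ n : ℕ in atTop, ((n : ℝ) ^ ℓ * c ^ n)⁻¹ • (algebraMap ℝ 𝔸 c + x) ^ n =
      ∑ k ∈ range (ℓ + 1), ((n.choose k : ℝ) / (n : ℝ) ^ ℓ * (c ^ k)⁻¹) • x ^ k := by
    filter_upwards [eventually_ge_atTop ℓ] with n hn
    rw [hexpand n hn, Finset.smul_sum]
    refine Finset.sum_congr rfl fun k hk => ?_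
    rw [smul_smul, ← pow_sub_mul_pow c (show k ≤ n by grind)]
    field_simp
  refine Tendsto.congr' (EventuallyEq.symm hscaled) ?_
  simp_rw [Finset.sum_range_succ]
  have hlow := tendsto_finsetSum (range ℓ) fun k hk =>
    ((tendsto_choose_div_pow_of_lt (mem_range.mp hk)).mul_const (c ^ k)⁻¹).smul_const (x ^ k)
  have htop := ((tendsto_choose_div_pow_self ℓ).mul_const (c ^ ℓ)⁻¹).smul_const (x ^ ℓ)
  convert hlow.add htop using 2
  simp [mul_comm]

section SupPosPart

variable {ι : Type*}

def supPosPart (x : ι → ℝ) : ℝ := ⨆ i, max 0 (x i)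

@[fun_prop]
lemma continuous_supPosPart [Fintype ι] : Continuous (supPosPart : (ι → ℝ) → ℝ) := by
  change Continuous fun x : ι → ℝ => ⨆ i, max 0 (x i)
  cases isEmpty_or_nonempty ι
  · simp_rw [Real.iSup_of_isEmpty]
    exact continuous_const
  · simp_rw [← Finset.sup'_univ_eq_ciSup]
    fun_prop

lemma supPosPart_zero : supPosPart (0 : ι → ℝ) = 0 := by
  simp [supPosPart]

lemma supPosPart_smul {c : ℝ} (hc : 0 ≤ c) (x : ι → ℝ) :
    supPosPart (c • x) = c * supPosPart x := by
  simp_rw [supPosPart, Real.mul_iSup_of_nonneg hc, mul_max_of_nonneg _ _ hc, mul_zero]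
  rfl

end SupPosPart

lemma log_apply_phi {K F : Type*} [Field K] [FunLike F K ℝ] [MonoidWithZeroHomClass F K ℝ]
    (f : F) {N : ℕ} (B : Matrix (Fin N) (Fin N) ℤ) (P : Fin N → Kˣ) (i : Fin N) :
    Real.log (f (phi B P i : Kˣ)) = (B.map (↑) *ᵥ fun j => Real.log (f (P j))) i := by
  simp only [phi, Units.coe_prod, Units.val_zpow_eq_zpow_val, map_prod, map_zpow₀]
  rw [Real.log_prod fun j _ => zpow_ne_zero _ ((map_ne_zero f).mpr (P j).ne_zero)]
  simp [Matrix.mulVec, dotProduct, Real.log_zpow]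

section Height

variable {K : Type*} [Field K] [NumberField K] {N : ℕ}

lemma finVal_eq_log_adicAbv (v : HeightOneSpectrum (𝓞 K)) (a : K) :
    finVal K v a = Real.log (adicAbv K v a) := by
  rcases eq_or_ne a 0 with rfl | ha
  · simp [finVal]
  rw [finVal, dif_neg ha, adicAbv_def,
    WithZeroMulInt.toNNReal_neg_apply _ ((v.valuation K).ne_zero_iff.mpr ha)]
  push_cast
  rw [Real.log_zpow, mul_comm]

open NumberField.FinitePlace in
lemma finite_mulSupport_adicAbv {a : K} (ha : a ≠ 0) :
    (Function.mulSupport fun v : HeightOneSpectrum (𝓞 K) => adicAbv K v a).Finite := by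
  have : (fun v : HeightOneSpectrum (𝓞 K) => adicAbv K v a) =
      (fun w : NumberField.FinitePlace K => w a) ∘ equivHeightOneSpectrum.symm := by
    ext v
    simp [equivHeightOneSpectrum_symm_apply, norm_embedding]
  rw [this, Function.mulSupport_comp_eq_preimage]
  exact (hasFiniteMulSupport ha).preimage equivHeightOneSpectrum.symm.injective.injOn

/-- `h(φ_B(P))` written through the local logarithms of the coordinates of `P`, so that it makes
sense for real exponent matrices `B`. -/
def monomialHeight (P : Fin N → Kˣ) (B : Matrix (Fin N) (Fin N) ℝ) : ℝ :=
  (Module.finrank ℚ K : ℝ)⁻¹ *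
    ((∑ w : InfinitePlace K, (w.mult : ℝ) * supPosPart (B *ᵥ fun j => Real.log (w (P j)))) +
     ∑ᶠ v : HeightOneSpectrum (𝓞 K), supPosPart (B *ᵥ fun j => Real.log (adicAbv K v (P j))))

lemma uHeight_phi (P : Fin N → Kˣ) (B : Matrix (Fin N) (Fin N) ℤ) :
    uHeight K (phi B P) = monomialHeight P (B.map (↑)) := by
  simp only [uHeight, logHeight, monomialHeight, supPosPart, finVal_eq_log_adicAbv, log_apply_phi]

lemma monomialHeight_smul (P : Fin N → Kˣ) {c : ℝ} (hc : 0 ≤ c) (B : Matrix (Fin N) (Fin N) ℝ) :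
    monomialHeight P (c • B) = c * monomialHeight P B := by
  simp only [monomialHeight, Matrix.smul_mulVec, supPosPart_smul hc, ← mul_finsum _ c,
    mul_left_comm _ c, ← Finset.mul_sum]
  ring

lemma continuous_monomialHeight (P : Fin N → Kˣ) : Continuous (monomialHeight P) := by
  have hS :
      (⋃ j, Function.mulSupport fun v : HeightOneSpectrum (𝓞 K) => adicAbv K v (P j)).Finite :=
    Set.finite_iUnion fun j => finite_mulSupport_adicAbv (P j).ne_zero
  have hfin (B : Matrix (Fin N) (Fin N) ℝ) :
      ∑ᶠ v : HeightOneSpectrum (𝓞 K), supPosPart (B *ᵥ fun j => Real.log (adicAbv K v (P j))) =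
      ∑ v ∈ hS.toFinset, supPosPart (B *ᵥ fun j => Real.log (adicAbv K v (P j))) := by
    refine finsum_eq_sum_of_support_subset _ fun v hv => ?_
    rw [Set.Finite.coe_toFinset, Set.mem_iUnion]
    by_contra! h
    have : (fun j => Real.log (adicAbv K v (P j))) = 0 :=
      funext fun j => by simp [Function.notMem_mulSupport.mp (h j)]
    simp [this, supPosPart_zero] at hv
  unfold monomialHeight
  simp only [hfin]
  fun_prop

end Height

theorem statement16_general {N : ℕ} (lam : ℤ) (hlam : 1 < lam)
    (Nc : Matrix (Fin N) (Fin N) ℤ) (ℓ : ℕ)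
    (hnil : Nc ^ (ℓ + 1) = 0)
    (A : Matrix (Fin N) (Fin N) ℤ)
    (hA : A = lam • (1 : Matrix (Fin N) (Fin N) ℤ) + Nc)
    (K : Type*) [Field K] [NumberField K] (P : Fin N → Kˣ) :
    Filter.limsup
      (fun n : ℕ => uHeight K ((phi A)^[n] P) / ((n : ℝ) ^ ℓ * (lam : ℝ) ^ n))
      Filter.atTop
    = uHeight K (phi (Nc ^ ℓ) P) / ((ℓ.factorial : ℝ) * (lam : ℝ) ^ ℓ) := by
  have hlam_pos : (0 : ℝ) < lam := by exact_mod_cast one_pos.trans hlam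
  let castR := (Int.castRingHom ℝ).mapMatrix (m := Fin N)
  have hdiv (B : Matrix (Fin N) (Fin N) ℤ) {c : ℝ} (hc : 0 ≤ c) :
      uHeight K (phi B P) / c = monomialHeight P (c⁻¹ • castR B) := by
    rw [monomialHeight_smul P (inv_nonneg.2 hc), uHeight_phi, div_eq_inv_mul]
    rfl
  have hA' : castR A = algebraMap ℝ _ (lam : ℝ) + castR Nc := by
    simp only [castR, hA, map_add, map_zsmul, map_one, Algebra.algebraMap_eq_smul_one,
      Int.cast_smul_eq_zsmul]
  have hnil' : castR Nc ^ (ℓ + 1) = 0 := by rw [← map_pow, hnil, map_zero]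
  have hlim := ((continuous_monomialHeight P).tendsto _).comp
    (tendsto_smul_algebraMap_add_pow_of_pow_succ_eq_zero hnil' hlam_pos.ne')
  rw [hdiv _ (by positivity), map_pow]
  refine Tendsto.limsup_eq (hlim.congr fun n => ?_)
  rw [Function.comp_apply, phi_iterate, hdiv _ (by positivity), map_pow, hA']

/-- For A = λI + 𝒩, λ > 1 an integer, 𝒩^{ℓ+1} = 0 ≠ 𝒩^ℓ (largest Jordan block size ℓ+1,
A not diagonalizable), and π = φ_{𝒩^ℓ} = φ_{(A-λI)^ℓ}:
ĥ_A⁺(P) = limsup h(φ_A^n(P))/(n^ℓ·λⁿ) = h(π(P))/(ℓ!·λ^ℓ). -/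
theorem statement16 {N : ℕ} (lam : ℤ) (hlam : 1 < lam)
    (Nc : Matrix (Fin N) (Fin N) ℤ) (ℓ : ℕ) (hℓ : 1 ≤ ℓ)
    (hnil : Nc ^ (ℓ + 1) = 0) (hne : Nc ^ ℓ ≠ 0)
    (A : Matrix (Fin N) (Fin N) ℤ)
    (hA : A = lam • (1 : Matrix (Fin N) (Fin N) ℤ) + Nc)
    (K : Type*) [Field K] [NumberField K] (P : Fin N → Kˣ) :
    Filter.limsup
      (fun n : ℕ => uHeight K ((phi A)^[n] P) / ((n : ℝ) ^ ℓ * (lam : ℝ) ^ n))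
      Filter.atTop
    = uHeight K (phi (Nc ^ ℓ) P) / ((ℓ.factorial : ℝ) * (lam : ℝ) ^ ℓ) :=
  statement16_general lam hlam Nc ℓ hnil A hA K P
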